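/- Let A ∈ ℝ^{m×n}, M ∈ ℝ^{m×c}, N ∈ ℝ^{r×n}, with condensed SVDs M = U_M Σ_M V_Mᵀ and N = U_N Σ_N V_Nᵀ. Suppose S_M ∈ ℝ^{s_c×m} and S_N ∈ ℝ^{s_r×n} satisfy: (a) for all x, ‖S_M U_M x‖₂² ≥ (1/2)‖U_M x‖₂² and ‖S_N V_N x‖₂² ≥ (1/2)‖V_N x‖₂², with also ‖S_M U_M x‖₂² ≤ (3/2)‖U_M x‖₂²; (b) ‖U_MᵀS_MᵀS_M B − U_Mᵀ B‖_F ≤ √(ε/c)‖U_M‖_F‖B‖_F for all B ∈ ℝ^{m×k}, and ‖C S_NᵀS_N V_N − C V_N‖_F ≤ √(ε/r)‖C‖_F‖V_N‖_F for all C ∈ ℝ^{k×n} (for relevant k). Let X* = M†AN† and X̂ = (S_M M)†S_M A S_Nᵀ(N S_Nᵀ)†. Then ‖A − MX̂N‖_F² ≤ (1 + 256ε)‖A − MX*N‖_F². -/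

import Mathlib

/-!
Let `E = A - U_M U_Mᵀ A V_N V_Nᵀ`; this is `A - M X* N`, because `M M† = U_M U_Mᵀ` and
`N† N = V_N V_Nᵀ`. Writing `M X̂ N = U_M Y V_Nᵀ` and `Z = Y - U_Mᵀ A V_N`, the identity
`U_Mᵀ E V_N = 0` gives `‖A - M X̂ N‖² = ‖E‖² + ‖Z‖²`. The normal equations of the sketched problem
say `(S_M U_M)ᵀ (S_M U_M) Z (S_N V_N)ᵀ (S_N V_N) = U_Mᵀ S_Mᵀ S_M E S_Nᵀ S_N V_N`. The subspace
embeddings bound both Gram factors below by `1/2`, so `‖Z‖` is at most four times the right-hand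
side. The approximate matrix products, applied to `U_Mᵀ E V_N = 0`, bound the right-hand side by
`√ε (2 + √ε) ‖E‖`, hence `‖Z‖² ≤ 144 ε ‖E‖²`.
-/

open Matrix BigOperators

/-- The four Penrose conditions: `P` is the Moore–Penrose pseudoinverse of `M`. -/
def IsMoorePenrose {m n : ℕ} (M : Matrix (Fin m) (Fin n) ℝ)
    (P : Matrix (Fin n) (Fin m) ℝ) : Prop :=
  M * P * M = M ∧ P * M * P = P ∧ (M * P)ᵀ = M * P ∧ (P * M)ᵀ = P * M

/-- Frobenius norm of a real matrix. -/
noncomputable def frobNorm {m n : ℕ} (A : Matrix (Fin m) (Fin n) ℝ) : ℝ :=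
  Real.sqrt (∑ i, ∑ j, (A i j) ^ 2)

/-- Spectral (operator ℓ₂→ℓ₂) norm of a real matrix. -/
noncomputable def specNorm {m n : ℕ} (A : Matrix (Fin m) (Fin n) ℝ) : ℝ :=
  ‖LinearMap.toContinuousLinearMap (Matrix.toEuclideanLin A)‖

/-- Squared Euclidean norm of a vector. -/
def sqNorm {n : ℕ} (x : Fin n → ℝ) : ℝ := ∑ i, (x i) ^ 2

section Frobenius

variable {m n p d : ℕ}

lemma frobNorm_nonneg (A : Matrix (Fin m) (Fin n) ℝ) : 0 ≤ frobNorm A :=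
  Real.sqrt_nonneg _

lemma frobNorm_sq (A : Matrix (Fin m) (Fin n) ℝ) :
    frobNorm A ^ 2 = ∑ i, ∑ j, A i j ^ 2 :=
  Real.sq_sqrt (by positivity)

lemma frobNorm_transpose (A : Matrix (Fin m) (Fin n) ℝ) : frobNorm Aᵀ = frobNorm A := by
  unfold frobNorm; rw [Finset.sum_comm]; rfl

lemma trace_transpose_mul_eq_sum (A B : Matrix (Fin m) (Fin n) ℝ) :
    (Aᵀ * B).trace = ∑ i, ∑ j, A i j * B i j := by
  simp only [Matrix.trace, Matrix.diag, Matrix.mul_apply, Matrix.transpose_apply]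
  rw [Finset.sum_comm]

lemma frobNorm_sq_eq_trace (A : Matrix (Fin m) (Fin n) ℝ) :
    frobNorm A ^ 2 = (Aᵀ * A).trace := by
  rw [frobNorm_sq, trace_transpose_mul_eq_sum]; simp only [sq]

lemma trace_transpose_mul_le (A B : Matrix (Fin m) (Fin n) ℝ) :
    (Aᵀ * B).trace ≤ frobNorm A * frobNorm B := by
  have hcs : (Aᵀ * B).trace ^ 2 ≤ (frobNorm A * frobNorm B) ^ 2 := by
    have := Finset.sum_mul_sq_le_sq_mul_sq Finset.univ
      (fun q : Fin m × Fin n => A q.1 q.2) (fun q => B q.1 q.2)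
    simpa [Fintype.sum_prod_type, trace_transpose_mul_eq_sum, mul_pow, frobNorm_sq] using this
  exact abs_le_of_sq_le_sq' hcs (by positivity [frobNorm_nonneg A, frobNorm_nonneg B]) |>.2

lemma frobNorm_add_sq (A B : Matrix (Fin m) (Fin n) ℝ) :
    frobNorm (A + B) ^ 2 = frobNorm A ^ 2 + frobNorm B ^ 2 + 2 * (Aᵀ * B).trace := by
  have h : (Bᵀ * A).trace = (Aᵀ * B).trace := by
    rw [← Matrix.trace_transpose, Matrix.transpose_mul, Matrix.transpose_transpose]
  simp only [frobNorm_sq_eq_trace, Matrix.transpose_add, Matrix.add_mul, Matrix.mul_add,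
    Matrix.trace_add, h]
  ring

lemma frobNorm_sub_sq (A B : Matrix (Fin m) (Fin n) ℝ) :
    frobNorm (A - B) ^ 2 = frobNorm A ^ 2 + frobNorm B ^ 2 - 2 * (Aᵀ * B).trace := by
  have h : (Bᵀ * A).trace = (Aᵀ * B).trace := by
    rw [← Matrix.trace_transpose, Matrix.transpose_mul, Matrix.transpose_transpose]
  simp only [frobNorm_sq_eq_trace, Matrix.transpose_sub, Matrix.sub_mul, Matrix.mul_sub,
    Matrix.trace_sub, h]
  ring

lemma frobNorm_add_le (A B : Matrix (Fin m) (Fin n) ℝ) :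
    frobNorm (A + B) ≤ frobNorm A + frobNorm B := by
  have hA := frobNorm_nonneg A
  have hB := frobNorm_nonneg B
  have h := frobNorm_add_sq A B
  have := trace_transpose_mul_le A B
  nlinarith [frobNorm_nonneg (A + B)]

lemma frobNorm_orthonormal_mul {U : Matrix (Fin m) (Fin p) ℝ} (hU : Uᵀ * U = 1)
    (X : Matrix (Fin p) (Fin n) ℝ) : frobNorm (U * X) = frobNorm X := by
  have h : frobNorm (U * X) ^ 2 = frobNorm X ^ 2 := by
    rw [frobNorm_sq_eq_trace, frobNorm_sq_eq_trace, Matrix.transpose_mul, Matrix.mul_assoc,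
      ← Matrix.mul_assoc Uᵀ, hU, Matrix.one_mul]
  exact (pow_left_inj₀ (frobNorm_nonneg _) (frobNorm_nonneg _) two_ne_zero).1 h

lemma frobNorm_mul_orthonormal_transpose {V : Matrix (Fin n) (Fin p) ℝ} (hV : Vᵀ * V = 1)
    (X : Matrix (Fin m) (Fin p) ℝ) : frobNorm (X * Vᵀ) = frobNorm X := by
  rw [← frobNorm_transpose, Matrix.transpose_mul, Matrix.transpose_transpose,
    frobNorm_orthonormal_mul hV, frobNorm_transpose]

lemma frobNorm_orthonormal {U : Matrix (Fin m) (Fin p) ℝ} (hU : Uᵀ * U = 1) :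
    frobNorm U = √p := by
  rw [← Real.sqrt_sq (frobNorm_nonneg U), frobNorm_sq_eq_trace, hU, Matrix.trace_one,
    Fintype.card_fin]

/-- `C = U Uᵀ C + (C - U Uᵀ C)` is an orthogonal splitting, and `‖U Uᵀ C‖ = ‖Uᵀ C‖`. -/
lemma frobNorm_transpose_orthonormal_mul_le {U : Matrix (Fin m) (Fin p) ℝ} (hU : Uᵀ * U = 1)
    (C : Matrix (Fin m) (Fin n) ℝ) : frobNorm (Uᵀ * C) ≤ frobNorm C := by
  have horth : ((U * (Uᵀ * C))ᵀ * (C - U * (Uᵀ * C))).trace = 0 := by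
    rw [Matrix.transpose_mul, Matrix.mul_sub, Matrix.mul_assoc, Matrix.mul_assoc,
      ← Matrix.mul_assoc Uᵀ U, hU, Matrix.one_mul, sub_self, Matrix.trace_zero]
  have h := frobNorm_add_sq (U * (Uᵀ * C)) (C - U * (Uᵀ * C))
  rw [add_sub_cancel, horth, frobNorm_orthonormal_mul hU] at h
  nlinarith [frobNorm_nonneg (Uᵀ * C), frobNorm_nonneg C, sq_nonneg (frobNorm (C - U * (Uᵀ * C)))]

lemma frobNorm_mul_orthonormal_le {V : Matrix (Fin n) (Fin p) ℝ} (hV : Vᵀ * V = 1)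
    (B : Matrix (Fin m) (Fin n) ℝ) : frobNorm (B * V) ≤ frobNorm B := by
  rw [← frobNorm_transpose, Matrix.transpose_mul, ← frobNorm_transpose B]
  exact frobNorm_transpose_orthonormal_mul_le hV Bᵀ

lemma frobNorm_sq_eq_sum_sqNorm_col (A : Matrix (Fin m) (Fin n) ℝ) :
    frobNorm A ^ 2 = ∑ j, sqNorm (Aᵀ j) := by
  rw [frobNorm_sq, Finset.sum_comm]; rfl

lemma mul_frobNorm_sq_le_of_sqNorm_mulVec_le {s : ℕ} {t : ℝ} {L : Matrix (Fin m) (Fin p) ℝ}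
    {K : Matrix (Fin s) (Fin p) ℝ} (h : ∀ x, t * sqNorm (L *ᵥ x) ≤ sqNorm (K *ᵥ x))
    (Z : Matrix (Fin p) (Fin n) ℝ) : t * frobNorm (L * Z) ^ 2 ≤ frobNorm (K * Z) ^ 2 := by
  have hcol : ∀ {r : ℕ} (X : Matrix (Fin r) (Fin p) ℝ) j, (X * Z)ᵀ j = X *ᵥ Zᵀ j := by
    intro r X j; ext i; simp [Matrix.mul_apply, Matrix.mulVec, dotProduct]
  simp only [frobNorm_sq_eq_sum_sqNorm_col, Finset.mul_sum, hcol]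
  exact Finset.sum_le_sum fun j _ => h _

lemma mul_frobNorm_le_frobNorm_gram_mul {s : ℕ} {t : ℝ} (K : Matrix (Fin s) (Fin p) ℝ)
    (Z : Matrix (Fin p) (Fin n) ℝ) (h : t * frobNorm Z ^ 2 ≤ frobNorm (K * Z) ^ 2) :
    t * frobNorm Z ≤ frobNorm (Kᵀ * K * Z) := by
  have hgram : frobNorm (K * Z) ^ 2 ≤ frobNorm Z * frobNorm (Kᵀ * K * Z) := by
    rw [frobNorm_sq_eq_trace, Matrix.transpose_mul, Matrix.mul_assoc, ← Matrix.mul_assoc Kᵀ]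
    exact trace_transpose_mul_le _ _
  rcases (frobNorm_nonneg Z).eq_or_lt with hZ | hZ
  · rw [← hZ, mul_zero]; exact frobNorm_nonneg _
  · exact le_of_mul_le_mul_right (by nlinarith) hZ

lemma mul_mul_frobNorm_le_frobNorm_gram_mul_gram {s r : ℕ} {t u : ℝ} (ht : 0 ≤ t)
    {K : Matrix (Fin s) (Fin m) ℝ} {L : Matrix (Fin r) (Fin n) ℝ}
    (hK : ∀ Z : Matrix (Fin m) (Fin n) ℝ, t * frobNorm Z ^ 2 ≤ frobNorm (K * Z) ^ 2)
    (hL : ∀ Z : Matrix (Fin n) (Fin m) ℝ, u * frobNorm Z ^ 2 ≤ frobNorm (L * Z) ^ 2)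
    (Z : Matrix (Fin m) (Fin n) ℝ) :
    t * u * frobNorm Z ≤ frobNorm (Kᵀ * K * Z * (Lᵀ * L)) := by
  have hright : u * frobNorm Z ≤ frobNorm (Z * (Lᵀ * L)) := by
    have h := mul_frobNorm_le_frobNorm_gram_mul L Zᵀ (hL Zᵀ)
    rwa [frobNorm_transpose, ← frobNorm_transpose (Lᵀ * L * Zᵀ), Matrix.transpose_mul,
      Matrix.transpose_mul, Matrix.transpose_transpose, Matrix.transpose_transpose] at h
  calc t * u * frobNorm Z ≤ t * frobNorm (Z * (Lᵀ * L)) := by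
        rw [mul_assoc]; exact mul_le_mul_of_nonneg_left hright ht
    _ ≤ frobNorm (Kᵀ * K * Z * (Lᵀ * L)) := by
        rw [Matrix.mul_assoc _ Z]; exact mul_frobNorm_le_frobNorm_gram_mul K _ (hK _)

end Frobenius

section SketchedRegression

variable {m n p q s t : ℕ} {U : Matrix (Fin m) (Fin p) ℝ} {V : Matrix (Fin n) (Fin q) ℝ}

lemma frobNorm_sub_orthonormal_conj_sq (hU : Uᵀ * U = 1) (hV : Vᵀ * V = 1)
    {E : Matrix (Fin m) (Fin n) ℝ} (hE : Uᵀ * E * V = 0) (Z : Matrix (Fin p) (Fin q) ℝ) :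
    frobNorm (E - U * Z * Vᵀ) ^ 2 = frobNorm E ^ 2 + frobNorm Z ^ 2 := by
  have horth : (Eᵀ * (U * Z * Vᵀ)).trace = 0 := calc
    (Eᵀ * (U * Z * Vᵀ)).trace = (Eᵀ * U * Z * Vᵀ).trace := by simp only [Matrix.mul_assoc]
    _ = (Vᵀ * (Eᵀ * U * Z)).trace := Matrix.trace_mul_comm _ _
    _ = ((Uᵀ * E * V)ᵀ * Z).trace := by
        simp only [Matrix.transpose_mul, Matrix.transpose_transpose, Matrix.mul_assoc]
    _ = 0 := by rw [hE, Matrix.transpose_zero, Matrix.zero_mul, Matrix.trace_zero]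
  rw [frobNorm_sub_sq, horth, frobNorm_mul_orthonormal_transpose hV, frobNorm_orthonormal_mul hU]
  ring

lemma frobNorm_sketch_residual_le {δ : ℝ} (hδ : 0 ≤ δ) (hU : Uᵀ * U = 1) (hV : Vᵀ * V = 1)
    {S : Matrix (Fin s) (Fin m) ℝ} {T : Matrix (Fin t) (Fin n) ℝ}
    (hSU : ∀ {k : ℕ} (B : Matrix (Fin m) (Fin k) ℝ),
      frobNorm (Uᵀ * Sᵀ * S * B - Uᵀ * B) ≤ δ * frobNorm B)
    (hTV : ∀ {k : ℕ} (C : Matrix (Fin k) (Fin n) ℝ),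
      frobNorm (C * Tᵀ * T * V - C * V) ≤ δ * frobNorm C)
    {E : Matrix (Fin m) (Fin n) ℝ} (hE : Uᵀ * E * V = 0) :
    frobNorm (Uᵀ * Sᵀ * S * E * Tᵀ * T * V) ≤ δ * (2 + δ) * frobNorm E := by
  set F := E * Tᵀ * T * V
  have hF : frobNorm F ≤ (1 + δ) * frobNorm E := by
    have := frobNorm_add_le (E * V) (F - E * V)
    rw [add_sub_cancel] at this
    linarith [frobNorm_mul_orthonormal_le hV E, hTV E]
  have hsplit : Uᵀ * Sᵀ * S * E * Tᵀ * T * V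
      = (Uᵀ * Sᵀ * S * F - Uᵀ * F) + (Uᵀ * E * Tᵀ * T * V - Uᵀ * E * V) := by
    rw [hE, sub_zero]; simp only [F, Matrix.mul_assoc, sub_add_cancel]
  calc frobNorm (Uᵀ * Sᵀ * S * E * Tᵀ * T * V)
      ≤ δ * frobNorm F + δ * frobNorm (Uᵀ * E) := by
        rw [hsplit]; exact (frobNorm_add_le _ _).trans (add_le_add (hSU F) (hTV (Uᵀ * E)))
    _ ≤ δ * ((1 + δ) * frobNorm E) + δ * frobNorm E := by
        gcongr; exact frobNorm_transpose_orthonormal_mul_le hU E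
    _ = δ * (2 + δ) * frobNorm E := by ring

theorem frobNorm_sq_sub_le_of_sketched_normal_eq {δ : ℝ} (hδ : 0 ≤ δ) (hU : Uᵀ * U = 1)
    (hV : Vᵀ * V = 1) {S : Matrix (Fin s) (Fin m) ℝ} {T : Matrix (Fin t) (Fin n) ℝ}
    (hS : ∀ x, (1 / 2) * sqNorm (U *ᵥ x) ≤ sqNorm ((S * U) *ᵥ x))
    (hT : ∀ x, (1 / 2) * sqNorm (V *ᵥ x) ≤ sqNorm ((T * V) *ᵥ x))
    (hSU : ∀ {k : ℕ} (B : Matrix (Fin m) (Fin k) ℝ),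
      frobNorm (Uᵀ * Sᵀ * S * B - Uᵀ * B) ≤ δ * frobNorm B)
    (hTV : ∀ {k : ℕ} (C : Matrix (Fin k) (Fin n) ℝ),
      frobNorm (C * Tᵀ * T * V - C * V) ≤ δ * frobNorm C)
    (A : Matrix (Fin m) (Fin n) ℝ) {Y : Matrix (Fin p) (Fin q) ℝ}
    (hY : Uᵀ * Sᵀ * S * (U * Y * Vᵀ - A) * Tᵀ * T * V = 0) :
    frobNorm (A - U * Y * Vᵀ) ^ 2 ≤
      (1 + (4 * δ * (2 + δ)) ^ 2) * frobNorm (A - U * Uᵀ * A * V * Vᵀ) ^ 2 := by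
  set E := A - U * Uᵀ * A * V * Vᵀ
  set Z := Y - Uᵀ * A * V
  have hE : Uᵀ * E * V = 0 := by
    simp only [E, Matrix.mul_sub, Matrix.sub_mul]
    simp only [← Matrix.mul_assoc, hU, Matrix.one_mul]
    simp only [Matrix.mul_assoc, hV, Matrix.mul_one, sub_self]
  have hres : A - U * Y * Vᵀ = E - U * Z * Vᵀ := by
    simp only [E, Z, Matrix.mul_sub, Matrix.sub_mul, Matrix.mul_assoc]; abel
  have hnormal : (S * U)ᵀ * (S * U) * Z * ((T * V)ᵀ * (T * V)) = Uᵀ * Sᵀ * S * E * Tᵀ * T * V := by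
    rw [← sub_eq_zero, ← hY, ← neg_sub A, hres, neg_sub]
    simp only [Matrix.transpose_mul, Matrix.mul_sub, Matrix.sub_mul, Matrix.mul_assoc]
  have hK : ∀ X : Matrix (Fin p) (Fin q) ℝ, 1 / 2 * frobNorm X ^ 2 ≤ frobNorm (S * U * X) ^ 2 :=
    fun X => by
      simpa [frobNorm_orthonormal_mul hU, Matrix.mul_assoc] using
        mul_frobNorm_sq_le_of_sqNorm_mulVec_le hS X
  have hL : ∀ X : Matrix (Fin q) (Fin p) ℝ, 1 / 2 * frobNorm X ^ 2 ≤ frobNorm (T * V * X) ^ 2 :=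
    fun X => by
      simpa [frobNorm_orthonormal_mul hV, Matrix.mul_assoc] using
        mul_frobNorm_sq_le_of_sqNorm_mulVec_le hT X
  have hZ := mul_mul_frobNorm_le_frobNorm_gram_mul_gram (by norm_num) hK hL Z
  rw [hnormal] at hZ
  have hR := frobNorm_sketch_residual_le hδ hU hV hSU hTV hE
  have hZE : frobNorm Z ≤ 4 * δ * (2 + δ) * frobNorm E := by linarith
  rw [hres, frobNorm_sub_orthonormal_conj_sq hU hV hE]
  nlinarith [frobNorm_nonneg Z, pow_le_pow_left₀ (frobNorm_nonneg Z) hZE 2]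

end SketchedRegression

namespace IsMoorePenrose

variable {m n : ℕ} {M : Matrix (Fin m) (Fin n) ℝ} {P : Matrix (Fin n) (Fin m) ℝ}

lemma transpose (h : IsMoorePenrose M P) : IsMoorePenrose Mᵀ Pᵀ := by
  obtain ⟨h1, h2, h3, h4⟩ := h
  refine ⟨?_, ?_, ?_, ?_⟩
  · simpa only [Matrix.transpose_mul, Matrix.mul_assoc] using congrArg Matrix.transpose h1
  · simpa only [Matrix.transpose_mul, Matrix.mul_assoc] using congrArg Matrix.transpose h2
  · rw [← Matrix.transpose_mul, Matrix.transpose_transpose, h4]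
  · rw [← Matrix.transpose_mul, Matrix.transpose_transpose, h3]

lemma transpose_mul_self_mul (h : IsMoorePenrose M P) : Mᵀ * M * P = Mᵀ := by
  rw [Matrix.mul_assoc, ← h.2.2.1, ← Matrix.transpose_mul, h.1]

lemma mul_self_mul_transpose (h : IsMoorePenrose M P) : P * M * Mᵀ = Mᵀ := by
  rw [← h.2.2.2, ← Matrix.transpose_mul, ← Matrix.mul_assoc, h.1]

/-- `M * P` is the orthogonal projector onto the column space of `M`, which `U` spans
orthonormally. -/
lemma mul_eq_of_eq_mul (h : IsMoorePenrose M P) {p : ℕ} {U : Matrix (Fin m) (Fin p) ℝ}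
    {B : Matrix (Fin p) (Fin n) ℝ} {B' : Matrix (Fin n) (Fin p) ℝ} (hM : M = U * B)
    (hU : Uᵀ * U = 1) (hB : B * B' = 1) : M * P = U * Uᵀ := by
  set W := B * P
  have hMP : M * P = U * W := by rw [hM, Matrix.mul_assoc]
  have hWU : W * U = 1 := by
    have h1 : U * W * U * B = U * B := by rw [← hMP, Matrix.mul_assoc (M * P), ← hM, h.1, hM]
    have h2 : U * (W * U) = U := by
      rw [← Matrix.mul_assoc, ← Matrix.mul_one (U * W * U), ← hB, ← Matrix.mul_assoc, h1,
        Matrix.mul_assoc, hB, Matrix.mul_one]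
    rw [← Matrix.one_mul (W * U), ← hU, Matrix.mul_assoc, h2, hU]
  have hWt : Wᵀ = U := by
    have h3 : Wᵀ * Uᵀ = U * W := by rw [← Matrix.transpose_mul, ← hMP, h.2.2.1]
    rw [← Matrix.mul_one Wᵀ, ← hU, ← Matrix.mul_assoc, h3, Matrix.mul_assoc, hWU,
      Matrix.mul_one]
  rw [hMP, ← hWt, Matrix.transpose_transpose]

lemma mul_eq_of_eq_mul_transpose (h : IsMoorePenrose M P) {q : ℕ}
    {V : Matrix (Fin n) (Fin q) ℝ} {C : Matrix (Fin m) (Fin q) ℝ} {C' : Matrix (Fin q) (Fin m) ℝ}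
    (hM : M = C * Vᵀ) (hV : Vᵀ * V = 1) (hC : C' * C = 1) : P * M = V * Vᵀ := by
  have hMt : Mᵀ * Pᵀ = V * Vᵀ :=
    h.transpose.mul_eq_of_eq_mul (by rw [hM, Matrix.transpose_mul, Matrix.transpose_transpose])
      hV (by rw [← Matrix.transpose_mul, hC, Matrix.transpose_one])
  rw [← h.2.2.2, Matrix.transpose_mul, hMt]

end IsMoorePenrose

section Factorizations

variable {m n p k : ℕ}

lemma transpose_mul_eq_zero_of_eq_mul {M : Matrix (Fin m) (Fin n) ℝ}
    {U : Matrix (Fin m) (Fin p) ℝ} {B : Matrix (Fin p) (Fin n) ℝ} {B' : Matrix (Fin n) (Fin p) ℝ}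
    (hM : M = U * B) (hB : B * B' = 1) {X : Matrix (Fin m) (Fin k) ℝ} (h : Mᵀ * X = 0) :
    Uᵀ * X = 0 := calc
  Uᵀ * X = B'ᵀ * (Mᵀ * X) := by
    rw [hM, Matrix.transpose_mul, ← Matrix.mul_assoc, ← Matrix.mul_assoc,
      ← Matrix.transpose_mul, hB, Matrix.transpose_one, Matrix.one_mul]
  _ = 0 := by rw [h, Matrix.mul_zero]

lemma mul_eq_zero_of_eq_mul_transpose {N : Matrix (Fin m) (Fin n) ℝ}
    {C : Matrix (Fin m) (Fin p) ℝ} {C' : Matrix (Fin p) (Fin m) ℝ} {V : Matrix (Fin n) (Fin p) ℝ}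
    (hN : N = C * Vᵀ) (hC : C' * C = 1) {X : Matrix (Fin k) (Fin n) ℝ} (h : X * Nᵀ = 0) :
    X * V = 0 := calc
  X * V = X * Nᵀ * C'ᵀ := by
    rw [hN, Matrix.transpose_mul, Matrix.transpose_transpose, Matrix.mul_assoc X,
      Matrix.mul_assoc V, ← Matrix.transpose_mul, hC, Matrix.transpose_one, Matrix.mul_one]
  _ = 0 := by rw [h, Matrix.zero_mul]

lemma card_le_of_transpose_mul_self_eq_one {V : Matrix (Fin m) (Fin p) ℝ} (hV : Vᵀ * V = 1) :
    p ≤ m := by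
  have h := (Matrix.rank_mul_le_right Vᵀ V).trans (Matrix.rank_le_card_height V)
  rwa [hV, Matrix.rank_one, Fintype.card_fin, Fintype.card_fin] at h

end Factorizations

lemma sketched_normal_eq {m n c r s t : ℕ} {S : Matrix (Fin s) (Fin m) ℝ}
    {T : Matrix (Fin t) (Fin n) ℝ} {M : Matrix (Fin m) (Fin c) ℝ} {N : Matrix (Fin r) (Fin n) ℝ}
    {P₁ : Matrix (Fin c) (Fin s) ℝ} {P₂ : Matrix (Fin t) (Fin r) ℝ}
    (hP₁ : IsMoorePenrose (S * M) P₁) (hP₂ : IsMoorePenrose (N * Tᵀ) P₂)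
    (A : Matrix (Fin m) (Fin n) ℝ) :
    Mᵀ * Sᵀ * S * (M * (P₁ * S * A * Tᵀ * P₂) * N - A) * Tᵀ * T * Nᵀ = 0 := calc
  _ = (S * M)ᵀ * (S * M) * P₁ * (S * A * Tᵀ) * (P₂ * (N * Tᵀ) * (N * Tᵀ)ᵀ)
      - (S * M)ᵀ * (S * A * Tᵀ) * (N * Tᵀ)ᵀ := by
    simp only [Matrix.transpose_mul, Matrix.transpose_transpose, Matrix.mul_sub, Matrix.sub_mul,
      Matrix.mul_assoc]
  _ = 0 := by rw [hP₁.transpose_mul_self_mul, hP₂.mul_self_mul_transpose, sub_self]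

lemma sqrt_div_mul_sqrt_le {ε : ℝ} (hε : 0 ≤ ε) {p c : ℕ} (hpc : p ≤ c) :
    √(ε / c) * √p ≤ √ε := by
  rw [← Real.sqrt_mul (by positivity)]
  refine Real.sqrt_le_sqrt ?_
  calc ε / c * p = ε * (p / c) := by ring
    _ ≤ ε * 1 := mul_le_mul_of_nonneg_left
        (div_le_one_of_le₀ (by exact_mod_cast hpc) (by positivity)) hε
    _ = ε := mul_one ε

theorem stmt17_general (m n c r sc sr ρM ρN : ℕ) (ε : ℝ) (hε : 0 < ε) (hε1 : ε < 1)
    (A : Matrix (Fin m) (Fin n) ℝ) (M : Matrix (Fin m) (Fin c) ℝ)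
    (N : Matrix (Fin r) (Fin n) ℝ)
    (UM : Matrix (Fin m) (Fin ρM) ℝ) (SigM : Matrix (Fin ρM) (Fin ρM) ℝ)
    (VM : Matrix (Fin c) (Fin ρM) ℝ)
    (UN : Matrix (Fin r) (Fin ρN) ℝ) (SigN : Matrix (Fin ρN) (Fin ρN) ℝ)
    (VN : Matrix (Fin n) (Fin ρN) ℝ)
    (hMsvd : M = UM * SigM * VMᵀ) (hNsvd : N = UN * SigN * VNᵀ)
    (hUM : UMᵀ * UM = 1) (hVM : VMᵀ * VM = 1)
    (hUN : UNᵀ * UN = 1) (hVN : VNᵀ * VN = 1)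
    (hSigM : IsUnit SigM.det)
    (hSigN : IsUnit SigN.det)
    (SM : Matrix (Fin sc) (Fin m) ℝ) (SN : Matrix (Fin sr) (Fin n) ℝ)
    -- (a) subspace-embedding properties
    (ha1 : ∀ x : Fin ρM → ℝ,
      (1 / 2) * sqNorm (UM.mulVec x) ≤ sqNorm ((SM * UM).mulVec x))
    (ha2 : ∀ x : Fin ρN → ℝ,
      (1 / 2) * sqNorm (VN.mulVec x) ≤ sqNorm ((SN * VN).mulVec x))
    -- (b) approximate-matrix-product properties
    (hb1 : ∀ (k : ℕ) (B : Matrix (Fin m) (Fin k) ℝ),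
      frobNorm (UMᵀ * SMᵀ * SM * B - UMᵀ * B) ≤
        Real.sqrt (ε / c) * frobNorm UM * frobNorm B)
    (hb2 : ∀ (k : ℕ) (C : Matrix (Fin k) (Fin n) ℝ),
      frobNorm (C * SNᵀ * SN * VN - C * VN) ≤
        Real.sqrt (ε / r) * frobNorm C * frobNorm VN)
    (Mdag : Matrix (Fin c) (Fin m) ℝ) (Ndag : Matrix (Fin n) (Fin r) ℝ)
    (hMdag : IsMoorePenrose M Mdag) (hNdag : IsMoorePenrose N Ndag)
    (P1 : Matrix (Fin c) (Fin sc) ℝ) (P2 : Matrix (Fin sr) (Fin r) ℝ)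
    (hP1 : IsMoorePenrose (SM * M) P1)
    (hP2 : IsMoorePenrose (N * SNᵀ) P2) :
    frobNorm (A - M * (P1 * SM * A * SNᵀ * P2) * N) ^ 2 ≤
      (1 + 256 * ε) * frobNorm (A - M * (Mdag * A * Ndag) * N) ^ 2 := by
  have hM : M = UM * (SigM * VMᵀ) := by rw [hMsvd, Matrix.mul_assoc]
  have hBM : SigM * VMᵀ * (VM * SigM⁻¹) = 1 := by
    rw [Matrix.mul_assoc, ← Matrix.mul_assoc VMᵀ, hVM, Matrix.one_mul,
      Matrix.mul_nonsing_inv _ hSigM]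
  have hCN : SigN⁻¹ * UNᵀ * (UN * SigN) = 1 := by
    rw [Matrix.mul_assoc, ← Matrix.mul_assoc UNᵀ, hUN, Matrix.one_mul,
      Matrix.nonsing_inv_mul _ hSigN]
  have hopt : M * (Mdag * A * Ndag) * N = UM * UMᵀ * A * VN * VNᵀ := by
    rw [show M * (Mdag * A * Ndag) * N = M * Mdag * A * (Ndag * N) by simp only [Matrix.mul_assoc],
      hMdag.mul_eq_of_eq_mul hM hUM hBM, hNdag.mul_eq_of_eq_mul_transpose hNsvd hVN hCN,
      ← Matrix.mul_assoc]
  set Y := SigM * VMᵀ * (P1 * SM * A * SNᵀ * P2) * (UN * SigN)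
  have hfac : M * (P1 * SM * A * SNᵀ * P2) * N = UM * Y * VNᵀ := by
    rw [hM, hNsvd]; simp only [Y, Matrix.mul_assoc]
  have hnormal : UMᵀ * SMᵀ * SM * (UM * Y * VNᵀ - A) * SNᵀ * SN * VN = 0 := by
    have h := sketched_normal_eq hP1 hP2 A
    rw [hfac] at h
    have h' := mul_eq_zero_of_eq_mul_transpose hNsvd hCN h
    simp only [Matrix.mul_assoc] at h' ⊢
    exact transpose_mul_eq_zero_of_eq_mul hM hBM h'
  have hδ : 0 ≤ √ε := Real.sqrt_nonneg ε
  have hSU : ∀ {k : ℕ} (B : Matrix (Fin m) (Fin k) ℝ),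
      frobNorm (UMᵀ * SMᵀ * SM * B - UMᵀ * B) ≤ √ε * frobNorm B := fun B =>
    (hb1 _ B).trans <| mul_le_mul_of_nonneg_right (by
      rw [frobNorm_orthonormal hUM]
      exact sqrt_div_mul_sqrt_le hε.le (card_le_of_transpose_mul_self_eq_one hVM))
      (frobNorm_nonneg B)
  have hTV : ∀ {k : ℕ} (C : Matrix (Fin k) (Fin n) ℝ),
      frobNorm (C * SNᵀ * SN * VN - C * VN) ≤ √ε * frobNorm C := fun C => by
    refine (hb2 _ C).trans ?_
    rw [frobNorm_orthonormal hVN, mul_right_comm]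
    exact mul_le_mul_of_nonneg_right
      (sqrt_div_mul_sqrt_le hε.le (card_le_of_transpose_mul_self_eq_one hUN)) (frobNorm_nonneg C)
  have hconst : (4 * √ε * (2 + √ε)) ^ 2 ≤ 256 * ε := by
    have hsq : √ε ^ 2 = ε := Real.sq_sqrt hε.le
    have hle : √ε ≤ 1 := Real.sqrt_le_one.mpr hε1.le
    nlinarith
  rw [hfac, hopt]
  refine (frobNorm_sq_sub_le_of_sketched_normal_eq hδ hUM hVN ha1 ha2 hSU hTV A hnormal).trans ?_
  exact mul_le_mul_of_nonneg_right (by linarith) (sq_nonneg _)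

theorem stmt17 (m n c r sc sr ρM ρN : ℕ) (ε : ℝ) (hε : 0 < ε) (hε1 : ε < 1)
    (A : Matrix (Fin m) (Fin n) ℝ) (M : Matrix (Fin m) (Fin c) ℝ)
    (N : Matrix (Fin r) (Fin n) ℝ)
    (UM : Matrix (Fin m) (Fin ρM) ℝ) (SigM : Matrix (Fin ρM) (Fin ρM) ℝ)
    (VM : Matrix (Fin c) (Fin ρM) ℝ)
    (UN : Matrix (Fin r) (Fin ρN) ℝ) (SigN : Matrix (Fin ρN) (Fin ρN) ℝ)
    (VN : Matrix (Fin n) (Fin ρN) ℝ)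
    (hMsvd : M = UM * SigM * VMᵀ) (hNsvd : N = UN * SigN * VNᵀ)
    (hUM : UMᵀ * UM = 1) (hVM : VMᵀ * VM = 1)
    (hUN : UNᵀ * UN = 1) (hVN : VNᵀ * VN = 1)
    (hSigM : IsUnit SigM.det) (hSigMdiag : ∀ i j, i ≠ j → SigM i j = 0)
    (hSigN : IsUnit SigN.det) (hSigNdiag : ∀ i j, i ≠ j → SigN i j = 0)
    (SM : Matrix (Fin sc) (Fin m) ℝ) (SN : Matrix (Fin sr) (Fin n) ℝ)
    -- (a) subspace-embedding properties
    (ha1 : ∀ x : Fin ρM → ℝ,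
      (1 / 2) * sqNorm (UM.mulVec x) ≤ sqNorm ((SM * UM).mulVec x))
    (ha2 : ∀ x : Fin ρN → ℝ,
      (1 / 2) * sqNorm (VN.mulVec x) ≤ sqNorm ((SN * VN).mulVec x))
    (ha3 : ∀ x : Fin ρM → ℝ,
      sqNorm ((SM * UM).mulVec x) ≤ (3 / 2) * sqNorm (UM.mulVec x))
    -- (b) approximate-matrix-product properties
    (hb1 : ∀ (k : ℕ) (B : Matrix (Fin m) (Fin k) ℝ),
      frobNorm (UMᵀ * SMᵀ * SM * B - UMᵀ * B) ≤
        Real.sqrt (ε / c) * frobNorm UM * frobNorm B)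
    (hb2 : ∀ (k : ℕ) (C : Matrix (Fin k) (Fin n) ℝ),
      frobNorm (C * SNᵀ * SN * VN - C * VN) ≤
        Real.sqrt (ε / r) * frobNorm C * frobNorm VN)
    (Mdag : Matrix (Fin c) (Fin m) ℝ) (Ndag : Matrix (Fin n) (Fin r) ℝ)
    (hMdag : IsMoorePenrose M Mdag) (hNdag : IsMoorePenrose N Ndag)
    (P1 : Matrix (Fin c) (Fin sc) ℝ) (P2 : Matrix (Fin sr) (Fin r) ℝ)
    (hP1 : IsMoorePenrose (SM * M) P1)
    (hP2 : IsMoorePenrose (N * SNᵀ) P2) :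
    frobNorm (A - M * (P1 * SM * A * SNᵀ * P2) * N) ^ 2 ≤
      (1 + 256 * ε) * frobNorm (A - M * (Mdag * A * Ndag) * N) ^ 2 :=
  stmt17_general m n c r sc sr ρM ρN ε hε hε1 A M N UM SigM VM UN SigN VN hMsvd hNsvd hUM hVM hUN
    hVN hSigM hSigN SM SN ha1 ha2 hb1 hb2 Mdag Ndag hMdag hNdag P1 P2 hP1 hP2
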